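/- arXiv:1005.2340 — 9 statements merged into one kernel-verified Lean document; each statement's English description precedes it below -/
import Mathlib

section
/- In any CBI-model, for all x, y, z ∈ R: z ∈ x ∘ y if and only if −x ∈ y ∘ −z, and also if and only if −y ∈ x ∘ −z. -/
structure CBIModel (R : Type*) where
  op : R → R → Set R
  e : R
  neg : R → R
  inf : R
  comm : ∀ x y, op x y = op y x
  assoc : ∀ x y z w : R, (∃ v ∈ op x y, w ∈ op v z) ↔ ∃ v ∈ op y z, w ∈ op x v
  unit : ∀ x, op x e = {x}
  inf_mem : ∀ x, inf ∈ op x (neg x)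
  neg_unique : ∀ x y, inf ∈ op x y → y = neg x

lemma CBIModel.neg_neg {R : Type*} (M : CBIModel R) (x : R) : M.neg (M.neg x) = x := by
  have h := M.inf_mem x
  rw [M.comm] at h
  exact (M.neg_unique _ _ h).symm

lemma CBIModel.fwd {R : Type*} (M : CBIModel R) (x y z : R)
    (h : z ∈ M.op x y) : M.neg x ∈ M.op y (M.neg z) := by
  have : ∃ v ∈ M.op x y, M.inf ∈ M.op v (M.neg z) := ⟨z, h, M.inf_mem z⟩
  obtain ⟨w, hw, hinf⟩ := (M.assoc x y (M.neg z) M.inf).mp this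
  rwa [M.neg_unique _ _ hinf] at hw

theorem CBIModel.mem_op_iff {R : Type*} (M : CBIModel R) (x y z : R) :
    (z ∈ M.op x y ↔ M.neg x ∈ M.op y (M.neg z)) ∧
    (z ∈ M.op x y ↔ M.neg y ∈ M.op x (M.neg z)) := by
  have key : ∀ a b c : R, c ∈ M.op a b ↔ M.neg a ∈ M.op b (M.neg c) := by
    intro a b c
    constructor
    · exact M.fwd a b c
    · intro h
      have h2 := M.fwd _ _ _ h
      rw [M.neg_neg] at h2
      rw [M.comm] at h2
      have h3 := M.fwd _ _ _ h2
      rw [M.neg_neg] at h3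
      have h4 := M.fwd _ _ _ h3
      rwa [M.neg_neg, M.neg_neg, M.comm] at h4
  refine ⟨key x y z, ?_⟩
  rw [M.comm]
  exact key y x z
end

section
/- In any CBI-model with any environment and element r, r satisfies F −∗ G if and only if r satisfies ∼F ⅋ G, where satisfaction is: r ⊨ F −∗ G iff for all r', r'' with r'' ∈ r ∘ r' and r' ⊨ F we have r'' ⊨ G; and r ⊨ F ⅋ G iff for all r₁, r₂ with −r ∈ r₁ ∘ r₂, either −r₁ ⊨ F or −r₂ ⊨ G. -/
inductive Formula (V : Type*) : Type _
  | var : V → Formula V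
  | top : Formula V
  | bot : Formula V
  | not : Formula V → Formula V
  | and : Formula V → Formula V → Formula V
  | or : Formula V → Formula V → Formula V
  | imp : Formula V → Formula V → Formula V
  | mtop : Formula V
  | mbot : Formula V
  | mneg : Formula V → Formula V
  | star : Formula V → Formula V → Formula V
  | par : Formula V → Formula V → Formula V
  | wand : Formula V → Formula V → Formula V

def sat {R V : Type*} (M : CBIModel R) (ρ : V → Set R) : R → Formula V → Prop
  | r, Formula.var p => r ∈ ρ p
  | _, Formula.top => True
  | _, Formula.bot => False
  | r, Formula.not F => ¬ sat M ρ r F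
  | r, Formula.and F G => sat M ρ r F ∧ sat M ρ r G
  | r, Formula.or F G => sat M ρ r F ∨ sat M ρ r G
  | r, Formula.imp F G => sat M ρ r F → sat M ρ r G
  | r, Formula.mtop => r = M.e
  | r, Formula.mbot => r ≠ M.inf
  | r, Formula.mneg F => ¬ sat M ρ (M.neg r) F
  | r, Formula.star F G => ∃ r₁ r₂, r ∈ M.op r₁ r₂ ∧ sat M ρ r₁ F ∧ sat M ρ r₂ G
  | r, Formula.par F G =>
      ∀ r₁ r₂, M.neg r ∈ M.op r₁ r₂ → sat M ρ (M.neg r₁) F ∨ sat M ρ (M.neg r₂) G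
  | r, Formula.wand F G =>
      ∀ r' r'', r'' ∈ M.op r r' → sat M ρ r' F → sat M ρ r'' G

lemma CBIModel.rot {R : Type*} (M : CBIModel R) {x y w : R} (h : w ∈ M.op x y) :
    M.neg x ∈ M.op y (M.neg w) := by
  have := (M.assoc x y (M.neg w) M.inf).mp ⟨w, h, M.inf_mem w⟩
  obtain ⟨v, hv, hinf⟩ := this
  rwa [M.neg_unique _ _ hinf] at hv

theorem sat_wand_iff_par {R V : Type*} (M : CBIModel R) (ρ : V → Set R) (r : R)
    (F G : Formula V) :
    sat M ρ r (Formula.wand F G) ↔ sat M ρ r (Formula.par (Formula.mneg F) G) := by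
  simp only [sat]
  constructor
  · intro h r₁ r₂ hmem
    rw [M.neg_neg]
    by_cases hF : sat M ρ r₁ F
    · right
      have hmem' : M.neg r ∈ M.op r₂ r₁ := by rwa [M.comm] at hmem
      have := M.rot hmem'
      rw [M.neg_neg, M.comm] at this
      exact h r₁ (M.neg r₂) this hF
    · exact Or.inl hF
  · intro h r' r'' hmem hF
    have := h r' (M.neg r'') (M.rot hmem)
    rw [M.neg_neg, M.neg_neg] at this
    exact this.resolve_left (fun hn => hn hF)
end

section
/- In any CBI-model with any environment and element r, r satisfies ∼F if and only if r satisfies F −∗ ⊥*. -/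
theorem sat_mneg_iff_wand_mbot {R V : Type*} (M : CBIModel R) (ρ : V → Set R) (r : R)
    (F : Formula V) :
    sat M ρ r (Formula.mneg F) ↔ sat M ρ r (Formula.wand F Formula.mbot) := by
  simp only [sat]
  constructor
  · intro h r' r'' hmem hF hinf
    subst hinf
    exact h ((M.neg_unique r r' hmem) ▸ hF)
  · intro h hF
    exact h (M.neg r) M.inf (M.inf_mem r) hF rfl
end

section
/- If ⟨R, ∘, e, −, ∞⟩ is a CBI-model in which ∘ is a partial function (i.e. |x ∘ y| ≤ 1 for all x, y) and ∞ = e, then ∘ is in fact total, and ⟨R, ∘, e, −⟩ is an Abelian group. -/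
theorem partial_functional_inf_eq_e_gives_abelian_group {R : Type*} (M : CBIModel R)
    (hpf : ∀ x y : R, (M.op x y).Subsingleton) (hinf : M.inf = M.e) :
    ∃ mul : R → R → R,
      (∀ x y, M.op x y = {mul x y}) ∧
      (∀ x y, mul x y = mul y x) ∧
      (∀ x y z, mul (mul x y) z = mul x (mul y z)) ∧
      (∀ x, mul x M.e = x) ∧
      (∀ x, mul x (M.neg x) = M.e) := by
  have he : ∀ x, M.e ∈ M.op x (M.neg x) := fun x => hinf ▸ M.inf_mem x
  -- totality
  have htot : ∀ x y, (M.op x y).Nonempty := by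
    intro x y
    have h2 : ∃ v ∈ M.op y (M.neg y), x ∈ M.op x v := by
      refine ⟨M.e, he y, ?_⟩
      rw [M.unit x]; rfl
    obtain ⟨v, hv, hx⟩ := (M.assoc x y (M.neg y) x).mpr h2
    exact ⟨v, hv⟩
  choose mul hmul using htot
  have hset : ∀ x y, M.op x y = {mul x y} := by
    intro x y
    ext z
    constructor
    · intro hz; exact hpf x y hz (hmul x y)
    · intro hz; rw [Set.mem_singleton_iff] at hz; exact hz ▸ hmul x y
  have hcomm : ∀ x y, mul x y = mul y x := by
    intro x y
    have := hmul x y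
    rw [M.comm x y, hset y x, Set.mem_singleton_iff] at this
    exact this
  have hunit : ∀ x, mul x M.e = x := by
    intro x
    have := hmul x M.e
    rw [M.unit x, Set.mem_singleton_iff] at this
    exact this
  have hneg : ∀ x, mul x (M.neg x) = M.e := by
    intro x
    have := he x
    rw [hset, Set.mem_singleton_iff] at this
    exact this.symm
  refine ⟨mul, hset, hcomm, ?_, hunit, hneg⟩
  intro x y z
  have h1 : ∃ v ∈ M.op x y, mul (mul x y) z ∈ M.op v z :=
    ⟨mul x y, hmul x y, hmul (mul x y) z⟩
  obtain ⟨v, hv, hw⟩ := (M.assoc x y z (mul (mul x y) z)).mp h1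
  rw [hset y z, Set.mem_singleton_iff] at hv
  subst hv
  rw [hset x (mul y z), Set.mem_singleton_iff] at hw
  exact hw
end

section
/- The BBI-formula I ∧ J → P, where I := ¬⊤* −∗ ⊥ and J := ⊤ ∗ (⊤* ∧ ¬(P −∗ ¬I)), is true in every CBI-model but is not true in every BBI-model; hence CBI is a non-conservative extension of BBI. In particular, it fails in the three-element BBI-model ⟨{e,a,b}, ∘, e⟩ with e ∘ x = x ∘ e = {x} and all other compositions empty, under the environment ρ(P) = {a}. -/
structure BBIModel (R : Type*) where
  op : R → R → Set R
  e : R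
  comm : ∀ x y, op x y = op y x
  assoc : ∀ x y z w : R, (∃ v ∈ op x y, w ∈ op v z) ↔ ∃ v ∈ op y z, w ∈ op x v
  unit : ∀ x, op x e = {x}

def CBIModel.toBBI {R : Type*} (M : CBIModel R) : BBIModel R :=
  ⟨M.op, M.e, M.comm, M.assoc, M.unit⟩

inductive BBIFormula (V : Type*) : Type _
  | var : V → BBIFormula V
  | top : BBIFormula V
  | bot : BBIFormula V
  | not : BBIFormula V → BBIFormula V
  | and : BBIFormula V → BBIFormula V → BBIFormula V
  | or : BBIFormula V → BBIFormula V → BBIFormula V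
  | imp : BBIFormula V → BBIFormula V → BBIFormula V
  | mtop : BBIFormula V
  | star : BBIFormula V → BBIFormula V → BBIFormula V
  | wand : BBIFormula V → BBIFormula V → BBIFormula V

def satB {R V : Type*} (M : BBIModel R) (ρ : V → Set R) : R → BBIFormula V → Prop
  | r, BBIFormula.var p => r ∈ ρ p
  | _, BBIFormula.top => True
  | _, BBIFormula.bot => False
  | r, BBIFormula.not F => ¬ satB M ρ r F
  | r, BBIFormula.and F G => satB M ρ r F ∧ satB M ρ r G
  | r, BBIFormula.or F G => satB M ρ r F ∨ satB M ρ r G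
  | r, BBIFormula.imp F G => satB M ρ r F → satB M ρ r G
  | r, BBIFormula.mtop => r = M.e
  | r, BBIFormula.star F G => ∃ r₁ r₂, r ∈ M.op r₁ r₂ ∧ satB M ρ r₁ F ∧ satB M ρ r₂ G
  | r, BBIFormula.wand F G => ∀ r' r'', r'' ∈ M.op r r' → satB M ρ r' F → satB M ρ r'' G

/-- I := ¬⊤* −∗ ⊥ -/
def fI : BBIFormula ℕ :=
  BBIFormula.wand (BBIFormula.not BBIFormula.mtop) BBIFormula.bot

/-- J := ⊤ ∗ (⊤* ∧ ¬(P −∗ ¬I)) -/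
def fJ : BBIFormula ℕ :=
  BBIFormula.star BBIFormula.top
    (BBIFormula.and BBIFormula.mtop
      (BBIFormula.not (BBIFormula.wand (BBIFormula.var 0) (BBIFormula.not fI))))

/-- I ∧ J → P -/
def fIJP : BBIFormula ℕ := BBIFormula.imp (BBIFormula.and fI fJ) (BBIFormula.var 0)


lemma satI_eq_inf {R : Type} (M : CBIModel R) (ρ : ℕ → Set R) (r : R)
    (h : satB M.toBBI ρ r fI) : r = M.inf := by
  have h1 := h (M.neg r) M.inf (M.inf_mem r)
  have hne : M.neg r = M.e := by
    by_contra hc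
    exact h1 hc
  have h2 : M.inf ∈ M.op r M.e := hne ▸ M.inf_mem r
  rw [M.unit] at h2
  exact h2.symm

def op0 : Fin 3 → Fin 3 → Set (Fin 3) := fun x y =>
  if x = 0 then {y} else if y = 0 then {x} else (∅ : Set (Fin 3))

lemma mem_op0 (x y w : Fin 3) : w ∈ op0 x y ↔ ((x = 0 ∧ w = y) ∨ (x ≠ 0 ∧ y = 0 ∧ w = x)) := by
  unfold op0
  by_cases hx : x = 0 <;> by_cases hy : y = 0 <;> simp [hx, hy]

def M0 : BBIModel (Fin 3) where
  op := op0
  e := 0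
  comm := by
    intro x y
    ext w
    rw [mem_op0, mem_op0]
    revert x y w; decide
  assoc := by
    intro x y z w
    simp only [mem_op0]
    revert x y z w; decide
  unit := by
    intro x
    unfold op0
    by_cases hx : x = 0 <;> simp [hx]

theorem CBI_nonconservative_over_BBI :
    (∀ (R : Type) (M : CBIModel R) (ρ : ℕ → Set R) (r : R), satB M.toBBI ρ r fIJP) ∧
    (∃ M₀ : BBIModel (Fin 3),
      M₀.e = 0 ∧
      (M₀.op = fun x y =>
        if x = 0 then {y} else if y = 0 then {x} else (∅ : Set (Fin 3))) ∧
      ¬ satB M₀ (fun _ => ({1} : Set (Fin 3))) 2 fIJP) := by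
  constructor
  · intro R M ρ r
    intro ⟨hI, hJ⟩
    obtain ⟨r₁, r₂, hmem, -, h2e, hnw⟩ := hJ
    have hr : r = M.inf := satI_eq_inf M ρ r hI
    -- extract witnesses from hnw
    simp only [satB, not_not] at hnw
    push_neg at hnw
    obtain ⟨r', r'', hm, hP, hI'⟩ := hnw
    have hr'' : r'' = M.inf := satI_eq_inf M ρ r'' hI'
    have h2e' : r₂ = M.e := h2e
    rw [h2e'] at hm
    have hm' : r'' ∈ M.op M.e r' := hm
    rw [M.comm, M.unit] at hm'
    have heq : r'' = r' := hm'
    show r ∈ ρ 0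
    rw [hr, ← hr'', heq]
    exact hP
  · refine ⟨M0, rfl, rfl, fun h => ?_⟩
    have hI2 : satB M0 (fun _ => ({1} : Set (Fin 3))) 2 fI := by
      intro r' r'' hm hne
      rw [show M0.op = op0 from rfl, mem_op0] at hm
      rcases hm with ⟨h1, -⟩ | ⟨-, h2, -⟩
      · exact absurd h1 (by decide)
      · exact hne h2
    have hI1 : satB M0 (fun _ => ({1} : Set (Fin 3))) 1 fI := by
      intro r' r'' hm hne
      rw [show M0.op = op0 from rfl, mem_op0] at hm
      rcases hm with ⟨h1, -⟩ | ⟨-, h2, -⟩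
      · exact absurd h1 (by decide)
      · exact hne h2
    have hJ2 : satB M0 (fun _ => ({1} : Set (Fin 3))) 2 fJ := by
      refine ⟨2, 0, ?_, trivial, rfl, ?_⟩
      · rw [show M0.op = op0 from rfl, mem_op0]; right; exact ⟨by decide, rfl, rfl⟩
      · intro hw
        exact hw 1 1 (by rw [show M0.op = op0 from rfl, mem_op0]; left; exact ⟨rfl, rfl⟩) rfl hI1
    have := h ⟨hI2, hJ2⟩
    simp only [satB] at this
    exact absurd this (by decide)
end

section
/- In any CBI-model in which ∘ is a partial function, the formula K → L is true, where K := ¬(¬⊥* −∗ ¬⊤*) and L := ¬⊥* −∗ ⊤*. Semantically: for any element r, if e ∈ r ∘ ∞ then r ∘ ∞ ⊆ {e}. -/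
theorem partial_functional_K_imp_L {R : Type*} (M : CBIModel R)
    (hpf : ∀ x y : R, (M.op x y).Subsingleton) :
    (∀ (ρ : ℕ → Set R) (r : R),
      sat M ρ r (Formula.imp
        (Formula.not (Formula.wand (Formula.not Formula.mbot) (Formula.not Formula.mtop)))
        (Formula.wand (Formula.not Formula.mbot) Formula.mtop))) ∧
    (∀ r : R, M.e ∈ M.op r M.inf → M.op r M.inf ⊆ {M.e}) := by
  constructor
  · intro ρ r
    simp only [sat]
    intro hK r' r'' hmem hr'
    have hr'inf : r' = M.inf := not_not.mp hr'
    subst hr'inf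
    push_neg at hK
    obtain ⟨s', s'', hs, hsne, hse⟩ := hK
    subst hsne; subst hse
    exact hpf r M.inf hmem hs
  · intro r he x hx
    exact hpf r M.inf hx he
end

section
/- For any n ≥ 1 and any fixed m ∈ ℤ/nℤ, the structure ⟨ℤ/nℤ, +, 0, x ↦ m − x, m⟩ is a CBI-model, where + is addition modulo n. -/
theorem zmod_CBIModel (n : ℕ) (hn : 1 ≤ n) (m : ZMod n) :
    ∃ M : CBIModel (ZMod n),
      (M.op = fun x y => ({x + y} : Set (ZMod n))) ∧
      M.e = 0 ∧
      (M.neg = fun x => m - x) ∧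
      M.inf = m := by
  refine ⟨⟨fun x y => {x + y}, 0, fun x => m - x, m, ?_, ?_, ?_, ?_, ?_⟩, rfl, rfl, rfl, rfl⟩
  · intro x y; simp [add_comm]
  · intro x y z w
    constructor
    · rintro ⟨v, hv, hw⟩
      simp only [Set.mem_singleton_iff] at *
      exact ⟨y + z, rfl, by subst hv hw; ring⟩
    · rintro ⟨v, hv, hw⟩
      simp only [Set.mem_singleton_iff] at *
      exact ⟨x + y, rfl, by subst hv hw; ring⟩
  · intro x; simp
  · intro x; simp
  · intro x y h; simp only [Set.mem_singleton_iff] at h; subst h; ring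
end

section
/- Let A be an index set and for each a ∈ A let Mₐ = ⟨Rₐ, ∘ₐ, eₐ, −ₐ, ∞ₐ⟩ be a CBI-model. Then the product ⟨∏ₐ Rₐ, ∘, (eₐ)ₐ, −, (∞ₐ)ₐ⟩ is a CBI-model, where −((xₐ)ₐ) = (−ₐ xₐ)ₐ and (xₐ)ₐ ∘ (yₐ)ₐ = { (wₐ)ₐ : ∀a, wₐ ∈ xₐ ∘ₐ yₐ }. -/
theorem product_CBIModel {A : Type*} {R : A → Type*} (Ms : ∀ a, CBIModel (R a)) :
    ∃ M : CBIModel (∀ a, R a),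
      (∀ x y : ∀ a, R a, M.op x y = {w | ∀ a, w a ∈ (Ms a).op (x a) (y a)}) ∧
      M.e = (fun a => (Ms a).e) ∧
      (∀ x, M.neg x = fun a => (Ms a).neg (x a)) ∧
      M.inf = (fun a => (Ms a).inf) := by
  refine ⟨{
    op := fun x y => {w | ∀ a, w a ∈ (Ms a).op (x a) (y a)}
    e := fun a => (Ms a).e
    neg := fun x a => (Ms a).neg (x a)
    inf := fun a => (Ms a).inf
    comm := by
      intro x y
      ext w
      simp only [Set.mem_setOf_eq]
      constructor <;> intro h a <;> [rw [(Ms a).comm]; rw [(Ms a).comm]] <;> exact h a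
    assoc := by
      intro x y z w
      constructor
      · rintro ⟨v, hv1, hv2⟩
        have h : ∀ a, ∃ u ∈ (Ms a).op (y a) (z a), w a ∈ (Ms a).op (x a) u :=
          fun a => ((Ms a).assoc (x a) (y a) (z a) (w a)).mp ⟨v a, hv1 a, hv2 a⟩
        choose u hu1 hu2 using h
        exact ⟨u, hu1, hu2⟩
      · rintro ⟨v, hv1, hv2⟩
        have h : ∀ a, ∃ u ∈ (Ms a).op (x a) (y a), w a ∈ (Ms a).op u (z a) :=
          fun a => ((Ms a).assoc (x a) (y a) (z a) (w a)).mpr ⟨v a, hv1 a, hv2 a⟩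
        choose u hu1 hu2 using h
        exact ⟨u, hu1, hu2⟩
    unit := by
      intro x
      ext w
      simp only [Set.mem_setOf_eq, Set.mem_singleton_iff]
      constructor
      · intro h
        funext a
        have := h a
        rw [(Ms a).unit] at this
        exact this
      · rintro rfl a
        rw [(Ms a).unit]
        rfl
    inf_mem := fun x a => (Ms a).inf_mem (x a)
    neg_unique := by
      intro x y h
      funext a
      exact (Ms a).neg_unique (x a) (y a) (h a)
  }, fun _ _ => rfl, rfl, fun _ => rfl, rfl⟩
end

section
/- Let ⟨R, ∘, e⟩ be a BBI-model and let R̄ = { x̄ : x ∈ R } be a disjoint copy of R. Define −x = x̄ for x ∈ R and −x̄ = x, and define the relation ⊕ on R ∪ R̄ as the least relation such that: (1) z ∈ x ∘ y implies z ∈ x ⊕ y, and (2) z ∈ x ∘ y implies ȳ ∈ (x ⊕ z̄) and ȳ ∈ (z̄ ⊕ x). Then ⟨R ∪ R̄, ⊕, e, −, ē⟩ is a CBI-model. -/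
/-- The extended operation on `R ⊕ R`. -/
def eop {R : Type*} (B : BBIModel R) : R ⊕ R → R ⊕ R → Set (R ⊕ R)
  | .inl x, .inl y => Sum.inl '' B.op x y
  | .inl x, .inr z => Sum.inr '' {y | z ∈ B.op x y}
  | .inr z, .inl x => Sum.inr '' {y | z ∈ B.op x y}
  | .inr _, .inr _ => ∅

lemma eop_eq {R : Type*} (B : BBIModel R) : eop B = fun a b =>
    {c | (∃ x y z, a = Sum.inl x ∧ b = Sum.inl y ∧ c = Sum.inl z ∧ z ∈ B.op x y) ∨
         (∃ x y z, a = Sum.inl x ∧ b = Sum.inr z ∧ c = Sum.inr y ∧ z ∈ B.op x y) ∨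
         (∃ x y z, a = Sum.inr z ∧ b = Sum.inl x ∧ c = Sum.inr y ∧ z ∈ B.op x y)} := by
  funext a b
  ext c
  rcases a with x | x <;> rcases b with y | y <;> rcases c with z | z <;>
    simp [eop]

lemma eop_comm {R : Type*} (B : BBIModel R) : ∀ a b, eop B a b = eop B b a := by
  intro a b
  rcases a with x | x <;> rcases b with y | y <;> simp [eop, B.comm x y]

lemma eop_assoc {R : Type*} (B : BBIModel R) : ∀ a b c w : R ⊕ R,
    (∃ v ∈ eop B a b, w ∈ eop B v c) ↔ ∃ v ∈ eop B b c, w ∈ eop B a v := by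
  intro a b c w
  rcases a with x | x <;> rcases b with y | y <;> rcases c with z | z <;>
    simp [eop, Sum.exists, Set.mem_image] <;>
    rcases w with w | w <;> simp
  · exact B.assoc x y z w
  · constructor
    · rintro ⟨a, ha, hz⟩
      obtain ⟨u, hu, hz⟩ := (B.assoc y x w z).mp ⟨a, by rwa [B.comm], hz⟩
      exact ⟨u, hz, hu⟩
    · rintro ⟨a, hz, ha⟩
      obtain ⟨v, hv, hz⟩ := (B.assoc y x w z).mpr ⟨a, ha, hz⟩
      exact ⟨v, by rwa [B.comm] at hv, hz⟩
  · constructor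
    · rintro ⟨a, hy, ha⟩
      obtain ⟨v, hv, hy⟩ := (B.assoc x z w y).mpr ⟨a, ha, hy⟩
      obtain ⟨u, hu, hy⟩ := (B.assoc z x w y).mp ⟨v, by rwa [B.comm], hy⟩
      exact ⟨u, hy, hu⟩
    · rintro ⟨a, hy, ha⟩
      obtain ⟨v, hv, hy⟩ := (B.assoc z x w y).mpr ⟨a, ha, hy⟩
      obtain ⟨u, hu, hy⟩ := (B.assoc x z w y).mp ⟨v, by rwa [B.comm], hy⟩
      exact ⟨u, hy, hu⟩
  · constructor
    · rintro ⟨a, hx, ha⟩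
      obtain ⟨u, hu, hx⟩ := (B.assoc y z w x).mpr ⟨a, ha, hx⟩
      exact ⟨u, hu, hx⟩
    · rintro ⟨a, ha, hx⟩
      obtain ⟨v, hv, hx⟩ := (B.assoc y z w x).mp ⟨a, ha, hx⟩
      exact ⟨v, hx, hv⟩

lemma eop_unit {R : Type*} (B : BBIModel R) :
    ∀ a, eop B a (Sum.inl B.e) = {a} := by
  intro a
  rcases a with x | x <;> ext c <;> simp [eop, B.unit]
  · constructor
    · rintro ⟨y, hy, rfl⟩
      rw [B.comm, B.unit] at hy
      simp_all
    · rintro rfl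
      exact ⟨x, by rw [B.comm, B.unit]; rfl, rfl⟩

theorem BBI_extension_CBIModel {R : Type*} (B : BBIModel R) :
    ∃ M : CBIModel (R ⊕ R),
      (M.op = fun a b =>
        {c | (∃ x y z, a = Sum.inl x ∧ b = Sum.inl y ∧ c = Sum.inl z ∧ z ∈ B.op x y) ∨
             (∃ x y z, a = Sum.inl x ∧ b = Sum.inr z ∧ c = Sum.inr y ∧ z ∈ B.op x y) ∨
             (∃ x y z, a = Sum.inr z ∧ b = Sum.inl x ∧ c = Sum.inr y ∧ z ∈ B.op x y)}) ∧
      M.e = Sum.inl B.e ∧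
      (M.neg = Sum.elim Sum.inr Sum.inl) ∧
      M.inf = Sum.inr B.e := by
  refine ⟨{ op := eop B, e := Sum.inl B.e, neg := Sum.elim Sum.inr Sum.inl,
            inf := Sum.inr B.e, comm := eop_comm B, assoc := eop_assoc B,
            unit := eop_unit B, inf_mem := ?_, neg_unique := ?_ },
          eop_eq B, rfl, rfl, rfl⟩
  · intro a
    rcases a with x | x <;> simp [eop]
    · rw [B.unit]; rfl
    · rw [B.unit]; rfl
  · intro a b h
    rcases a with x | x <;> rcases b with y | y <;> simp [eop] at h ⊢
    · rw [B.unit] at h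
      simpa using h
    · rw [B.unit] at h
      simpa using h.symm
end
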